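/- arXiv:1608.08554 — 2 statements merged into one kernel-verified Lean document; each statement's English description precedes it below -/
import Mathlib

section
/- Let a, b, c, d ∈ F and ν ∈ ℚ be such that a·d − b·c = ν (as elements of F). Then the 2g×2g real matrix h = P⁻¹ · [[a⋆, b⋆], [c⋆, d⋆]] · P satisfies hᵀ · ψ · h = ν · ψ; moreover if ν ≠ 0 then h is invertible. (This is the key assertion of Proposition 3.4: the morphism ῑ maps G'(A)-points of the group G' = {γ ∈ GL₂(F) : det γ ∈ ℚ} into GSp(2g).) -/
/-!
Both `P` and the block matrix `[[a⋆, b⋆], [c⋆, d⋆]]` are symplectic similitudes: the first with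
multiplier `1`, because the trace-duality of the two bases says exactly `R'ᵀ R = 1`; the second
with multiplier `ν`, because its blocks are diagonal, hence commute, and `σᵢ(ad - bc) = ν` for
every embedding. Similitudes form a monoid in which multipliers multiply, and a similitude with
invertible multiplier is invertible (take determinants).
-/

open Matrix

namespace Matrix

variable {l R : Type*} [DecidableEq l] [CommRing R]

theorem fromBlocks_zero_one_neg_one_zero :
    (fromBlocks 0 1 (-1) 0 : Matrix (l ⊕ l) (l ⊕ l) R) = -J l R := by
  simp [J, fromBlocks_neg]

variable [Fintype l]

/-- Membership in `GSp` with multiplier `ν`. -/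
def IsSymplecticSimilitude (ν : R) (A : Matrix (l ⊕ l) (l ⊕ l) R) : Prop :=
  Aᵀ * J l R * A = ν • J l R

theorem isSymplecticSimilitude_one_iff {A : Matrix (l ⊕ l) (l ⊕ l) R} :
    IsSymplecticSimilitude 1 A ↔ A ∈ symplecticGroup l R := by
  rw [SymplecticGroup.mem_iff', IsSymplecticSimilitude, one_smul]

theorem IsSymplecticSimilitude.mul {μ ν : R} {A B : Matrix (l ⊕ l) (l ⊕ l) R}
    (hA : IsSymplecticSimilitude μ A) (hB : IsSymplecticSimilitude ν B) :
    IsSymplecticSimilitude (μ * ν) (A * B) := by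
  unfold IsSymplecticSimilitude at *
  calc (A * B)ᵀ * J l R * (A * B) = Bᵀ * (Aᵀ * J l R * A) * B := by
        simp only [transpose_mul, Matrix.mul_assoc]
    _ = (μ * ν) • J l R := by
        rw [hA, Matrix.mul_smul, Matrix.smul_mul, hB, smul_smul, mul_comm]

theorem IsSymplecticSimilitude.isUnit {ν : R} {A : Matrix (l ⊕ l) (l ⊕ l) R}
    (hA : IsSymplecticSimilitude ν A) (hν : IsUnit ν) : IsUnit A := by
  have hdet : A.det * A.det * (J l R).det = ν ^ Fintype.card (l ⊕ l) * (J l R).det := by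
    rw [← det_smul, ← hA, det_mul, det_mul, det_transpose, mul_right_comm]
  have hsq : IsUnit (A.det * A.det) := by
    rw [(isUnit_det_J l R).mul_left_inj.mp hdet]
    exact hν.pow _
  exact (isUnit_iff_isUnit_det A).mpr (isUnit_of_mul_isUnit_left hsq)

theorem isSymplecticSimilitude_fromBlocks {A B C D : Matrix l l R} (ν : R)
    (hAC : Aᵀ * C = Cᵀ * A) (hBD : Bᵀ * D = Dᵀ * B) (hADCB : Aᵀ * D - Cᵀ * B = ν • 1) :
    IsSymplecticSimilitude ν (fromBlocks A B C D) := by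
  have hDABC : Dᵀ * A - Bᵀ * C = ν • 1 := by
    simpa using congr(transpose $hADCB)
  simp only [IsSymplecticSimilitude, J, fromBlocks_transpose, fromBlocks_multiply, fromBlocks_smul,
    Matrix.mul_zero, Matrix.mul_one, Matrix.mul_neg, Matrix.neg_mul, zero_add, add_zero, smul_zero,
    smul_neg, ← sub_eq_add_neg, ← neg_sub (Aᵀ * D), hADCB, hDABC, hAC, hBD, sub_self]

theorem isSymplecticSimilitude_fromBlocks_diagonal (a b c d : l → R) (ν : R)
    (h : ∀ i, a i * d i - b i * c i = ν) :
    IsSymplecticSimilitude ν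
      (fromBlocks (diagonal a) (diagonal b) (diagonal c) (diagonal d)) := by
  refine isSymplecticSimilitude_fromBlocks ν ?_ ?_ ?_ <;>
    simp only [diagonal_transpose, diagonal_mul_diagonal, smul_one_eq_diagonal]
  · simp only [mul_comm]
  · simp only [mul_comm]
  · rw [diagonal_sub]
    exact congrArg diagonal (funext fun i => by rw [← h i, mul_comm (c i)])

theorem nonsing_inv_mem_symplecticGroup {A : Matrix (l ⊕ l) (l ⊕ l) R}
    (hA : A ∈ symplecticGroup l R) : A⁻¹ ∈ symplecticGroup l R := by
  simpa only [SymplecticGroup.coe_inv'] using (⟨A, hA⟩⁻¹ : symplecticGroup l R).2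

end Matrix

theorem transpose_mul_eq_one_of_trace_dual {K F L ι : Type*} [CommRing K] [CommRing F]
    [Algebra K F] [CommRing L] [Algebra K L] [Fintype ι] [DecidableEq ι]
    (σ : ι → F →+* L) (htr : ∀ x : F, algebraMap K L (Algebra.trace K F x) = ∑ i, σ i x)
    (e estar : ι → F)
    (hdual : ∀ j k, Algebra.trace K F (estar j * e k) = if j = k then 1 else 0) :
    (of fun i j => σ i (estar j))ᵀ * (of fun i j => σ i (e j)) = 1 := by
  ext j k
  have := htr (estar j * e k)
  simp only [hdual, map_mul] at this
  simp only [mul_apply, one_apply, transpose_apply, of_apply, ← this]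
  split_ifs <;> simp

theorem stmt_3_general
    (F : Type*) [Field F] [Algebra ℚ F]
    (g : ℕ)
    (σ : Fin g → (F →+* ℝ))
    (htr : ∀ x : F, (algebraMap ℚ ℝ) (Algebra.trace ℚ F x) = ∑ i, σ i x)
    (e estar : Fin g → F)
    (hdual : ∀ j k, Algebra.trace ℚ F (estar j * e k) = if j = k then 1 else 0)
    (R R' : Matrix (Fin g) (Fin g) ℝ)
    (hR : ∀ i j, R i j = σ i (e j))
    (hR' : ∀ i j, R' i j = σ i (estar j))
    (ψ P : Matrix (Fin g ⊕ Fin g) (Fin g ⊕ Fin g) ℝ)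
    (hψ : ψ = Matrix.fromBlocks 0 1 (-1) 0)
    (hP : P = Matrix.fromBlocks R' 0 0 R)
    (a b c d : F) (ν : ℚ)
    (hdet : a * d - b * c = algebraMap ℚ F ν)
    (h : Matrix (Fin g ⊕ Fin g) (Fin g ⊕ Fin g) ℝ)
    (hh : h = P⁻¹ * Matrix.fromBlocks
        (Matrix.diagonal fun i => σ i a) (Matrix.diagonal fun i => σ i b)
        (Matrix.diagonal fun i => σ i c) (Matrix.diagonal fun i => σ i d) * P) :
    hᵀ * ψ * h = (ν : ℝ) • ψ ∧ (ν ≠ 0 → IsUnit h) := by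
  obtain rfl : R = of fun i j => σ i (e j) := ext hR
  obtain rfl : R' = of fun i j => σ i (estar j) := ext hR'
  have hPsp : P ∈ symplecticGroup (Fin g) ℝ := by
    rw [hP, SymplecticGroup.fromBlocks_mem_iff]
    simp [transpose_mul_eq_one_of_trace_dual σ htr e estar hdual]
  have hM := isSymplecticSimilitude_fromBlocks_diagonal (fun i => σ i a) (fun i => σ i b)
      (fun i => σ i c) (fun i => σ i d) (ν : ℝ) fun i => by
    rw [← map_mul, ← map_mul, ← map_sub, hdet]
    exact eq_ratCast ((σ i).comp (algebraMap ℚ F)) ν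
  have hP₁ := isSymplecticSimilitude_one_iff.mpr hPsp
  have hPinv₁ := isSymplecticSimilitude_one_iff.mpr (nonsing_inv_mem_symplecticGroup hPsp)
  have hsim : IsSymplecticSimilitude (ν : ℝ) h := by
    simpa only [hh, one_mul, mul_one] using (hPinv₁.mul hM).mul hP₁
  refine ⟨?_, fun hν => hsim.isUnit (Rat.cast_ne_zero.mpr hν).isUnit⟩
  rw [hψ, fromBlocks_zero_one_neg_one_zero, Matrix.mul_neg, Matrix.neg_mul, smul_neg]
  exact congrArg Neg.neg hsim

/-- If `a, b, c, d ∈ F` and `ν ∈ ℚ` satisfy `a·d − b·c = ν` in `F`, then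
`h = P⁻¹ · [[a⋆, b⋆], [c⋆, d⋆]] · P` satisfies `hᵀ · ψ · h = ν · ψ`; moreover if `ν ≠ 0`
then `h` is invertible. (Key assertion of Proposition 3.4: `ῑ` maps `G'` into `GSp(2g)`.) -/
theorem stmt_3
    (F : Type*) [Field F] [Algebra ℚ F] [FiniteDimensional ℚ F]
    (g : ℕ) (hg : 1 ≤ g) (hdeg : Module.finrank ℚ F = g)
    (σ : Fin g → (F →+* ℝ)) (hσ : Function.Injective σ)
    (htr : ∀ x : F, (algebraMap ℚ ℝ) (Algebra.trace ℚ F x) = ∑ i, σ i x)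
    (e estar : Fin g → F)
    (he : ∀ x : F, ∃ q : Fin g → ℚ, x = ∑ i, q i • e i)
    (hdual : ∀ j k, Algebra.trace ℚ F (estar j * e k) = if j = k then 1 else 0)
    (R R' : Matrix (Fin g) (Fin g) ℝ)
    (hR : ∀ i j, R i j = σ i (e j))
    (hR' : ∀ i j, R' i j = σ i (estar j))
    (ψ P : Matrix (Fin g ⊕ Fin g) (Fin g ⊕ Fin g) ℝ)
    (hψ : ψ = Matrix.fromBlocks 0 1 (-1) 0)
    (hP : P = Matrix.fromBlocks R' 0 0 R)
    (a b c d : F) (ν : ℚ)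
    (hdet : a * d - b * c = algebraMap ℚ F ν)
    (h : Matrix (Fin g ⊕ Fin g) (Fin g ⊕ Fin g) ℝ)
    (hh : h = P⁻¹ * Matrix.fromBlocks
        (Matrix.diagonal fun i => σ i a) (Matrix.diagonal fun i => σ i b)
        (Matrix.diagonal fun i => σ i c) (Matrix.diagonal fun i => σ i d) * P) :
    hᵀ * ψ * h = (ν : ℝ) • ψ ∧ (ν ≠ 0 → IsUnit h) :=
  stmt_3_general F g σ htr e estar hdual R R' hR hR' ψ P hψ hP a b c d ν hdet h hh
end

section
/- Let n ≥ 1 be an integer and let a, b, c, d ∈ F satisfy a·d − b·c = 1, a − 1 ∈ n·𝒪_F, d − 1 ∈ n·𝒪_F, b ∈ n·𝒟⁻¹, and c = n·c₀ for some c₀ ∈ F with c₀·𝒟⁻¹ ⊆ 𝒪_F (i.e. c ∈ n·𝒟). Then every entry of the 2g×2g real matrix P⁻¹ · [[a⋆, b⋆], [c⋆, d⋆]] · P − I_{2g} lies in n·ℤ; that is, the corresponding integer symplectic matrix is congruent to the identity modulo n. (This is the assertion that ῑ maps the principal congruence subgroup Γ'(n) ⊆ SL(2, F) into the principal congruence subgroup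 Γ(n) ⊆ Sp(2g, ℤ).) -/
/-!
Writing `R = (σᵢ(eⱼ))` and `R' = (σᵢ(eⱼ*))`, every block of `P⁻¹ · [[a⋆, b⋆], [c⋆, d⋆]] · P` is a
matrix of traces: `(Uᵀ · x⋆ · V)ⱼₖ = Tr(x uⱼ vₖ)`, since the trace is the sum of the real
embeddings. Taking `x = 1` gives `Rᵀ R' = 1`, so `P⁻¹ = diag(Rᵀ, R'ᵀ)`, and subtracting the
identity replaces `a, d` by `a - 1, d - 1`. Each of `a - 1, b, c, d - 1` is `n` times an element
`x₀` for which `Tr(x₀ uⱼ vₖ)` is an integer: the trace pairing of `𝒪_F` with `𝒟⁻¹ ∋ eⱼ*`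
takes integer values, `b₀` pairs integrally with `eⱼ eₖ ∈ 𝒪_F`, and `c₀ eⱼ* ∈ 𝒪_F`.
-/

open Matrix

theorem Matrix.fromBlocks_sub_one {m n α : Type*} [DecidableEq m] [DecidableEq n]
    [AddGroupWithOne α] (A : Matrix m m α) (B : Matrix m n α) (C : Matrix n m α)
    (D : Matrix n n α) :
    fromBlocks A B C D - 1 = fromBlocks (A - 1) B C (D - 1) := by
  ext (i | i) (j | j) <;> simp [one_apply]

theorem Matrix.transpose_mul_diagonal_mul_sub_one {F ι κ : Type*} [Ring F] [Fintype ι]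
    [DecidableEq ι] [DecidableEq κ] {σ : ι → F →+* ℝ} {U V : Matrix ι κ ℝ} (hUV : Uᵀ * V = 1)
    (x : F) :
    Uᵀ * diagonal (fun i => σ i x) * V - 1 = Uᵀ * diagonal (fun i => σ i (x - 1)) * V := by
  have hdiag : diagonal (fun i => σ i (x - 1)) = diagonal (fun i => σ i x) - 1 := by
    rw [← diagonal_one, diagonal_sub]
    simp
  rw [hdiag, Matrix.mul_sub, Matrix.sub_mul, Matrix.mul_one, hUV]

theorem Matrix.inv_fromBlocks_zero_zero_of_transpose_mul_eq_one {n K : Type*} [Fintype n]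
    [DecidableEq n] [CommRing K] {A B : Matrix n n K} (h : Bᵀ * A = 1) :
    (fromBlocks A 0 0 B)⁻¹ = fromBlocks Bᵀ 0 0 Aᵀ := by
  refine inv_eq_left_inv ?_
  have h' : Aᵀ * B = 1 := by simpa [transpose_mul] using congrArg transpose h
  simp [fromBlocks_multiply, h, h']

def embMatrix {F ι κ : Type*} [NonAssocSemiring F] (σ : ι → F →+* ℝ) (x : κ → F) :
    Matrix ι κ ℝ :=
  of fun i j => σ i (x j)

section TraceForm

variable {F : Type*} [Field F] [Algebra ℚ F]

theorem embMatrix_transpose_mul_diagonal_mul_apply {ι κ₁ κ₂ : Type*} [Fintype ι]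
    [DecidableEq ι] {σ : ι → F →+* ℝ}
    (htr : ∀ x : F, algebraMap ℚ ℝ (Algebra.trace ℚ F x) = ∑ i, σ i x)
    (u : κ₁ → F) (v : κ₂ → F) (x : F) (j : κ₁) (k : κ₂) :
    ((embMatrix σ u)ᵀ * diagonal (fun i => σ i x) * embMatrix σ v) j k =
      algebraMap ℚ ℝ (Algebra.trace ℚ F (x * u j * v k)) := by
  rw [mul_apply, htr]
  simp only [mul_diagonal, transpose_apply, embMatrix, of_apply, map_mul]
  exact Finset.sum_congr rfl fun i _ => by ring

theorem embMatrix_transpose_mul_embMatrix_eq_one {ι : Type*} [Fintype ι] [DecidableEq ι]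
    {σ : ι → F →+* ℝ}
    (htr : ∀ x : F, algebraMap ℚ ℝ (Algebra.trace ℚ F x) = ∑ i, σ i x)
    {e estar : ι → F}
    (hdual : ∀ j k, Algebra.trace ℚ F (estar j * e k) = if j = k then 1 else 0) :
    (embMatrix σ e)ᵀ * embMatrix σ estar = 1 := by
  ext j k
  have h := embMatrix_transpose_mul_diagonal_mul_apply htr e estar 1 j k
  simp only [map_one, diagonal_one, Matrix.mul_one] at h
  rw [h, one_mul, mul_comm, hdual, one_apply]
  by_cases hjk : j = k
  · simp [hjk]
  · simp [hjk, Ne.symm hjk]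

theorem embMatrix_conj_apply_eq_natCast_mul {ι κ₁ κ₂ : Type*} [Fintype ι] [DecidableEq ι]
    {σ : ι → F →+* ℝ}
    (htr : ∀ x : F, algebraMap ℚ ℝ (Algebra.trace ℚ F x) = ∑ i, σ i x)
    {u : κ₁ → F} {v : κ₂ → F} {n : ℕ} {x x₀ : F} (hx : x = n * x₀) {j : κ₁} {k : κ₂} {m : ℤ}
    (hm : Algebra.trace ℚ F (x₀ * u j * v k) = m) :
    ((embMatrix σ u)ᵀ * diagonal (fun i => σ i x) * embMatrix σ v) j k = n * m := by
  rw [embMatrix_transpose_mul_diagonal_mul_apply htr, hx, mul_assoc, mul_assoc, ← nsmul_eq_mul,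
    map_nsmul, ← mul_assoc, hm]
  simp

-- The trace pairing with the dual basis reads off coordinates in the integral basis `e`.
theorem exists_trace_mul_dual_eq_intCast {ι : Type*} [Fintype ι] [DecidableEq ι]
    {e estar : ι → F}
    (hdual : ∀ j k, Algebra.trace ℚ F (estar j * e k) = if j = k then 1 else 0)
    (hspan : ∀ y : F, IsIntegral ℤ y → ∃ m : ι → ℤ, y = ∑ i, m i • e i)
    {x : F} (hx : IsIntegral ℤ x) (k : ι) :
    ∃ m : ℤ, Algebra.trace ℚ F (x * estar k) = m := by
  obtain ⟨m, rfl⟩ := hspan x hx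
  refine ⟨m k, ?_⟩
  simp only [Finset.sum_mul, map_sum, smul_mul_assoc, map_zsmul, mul_comm (e _), hdual]
  simp

end TraceForm

theorem stmt_9_general
    (F : Type*) [Field F] [Algebra ℚ F]
    (g : ℕ)
    (σ : Fin g → (F →+* ℝ))
    (htr : ∀ x : F, (algebraMap ℚ ℝ) (Algebra.trace ℚ F x) = ∑ i, σ i x)
    (e estar : Fin g → F)
    (hdual : ∀ j k, Algebra.trace ℚ F (estar j * e k) = if j = k then 1 else 0)
    (hint : ∀ i, IsIntegral ℤ (e i))
    (hspan : ∀ y : F, IsIntegral ℤ y → ∃ m : Fin g → ℤ, y = ∑ i, m i • e i)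
    (R R' : Matrix (Fin g) (Fin g) ℝ)
    (hR : ∀ i j, R i j = σ i (e j))
    (hR' : ∀ i j, R' i j = σ i (estar j))
    (P : Matrix (Fin g ⊕ Fin g) (Fin g ⊕ Fin g) ℝ)
    (hP : P = Matrix.fromBlocks R' 0 0 R)
    (n : ℕ)
    (a b c d : F)
    (ha : ∃ a₀ : F, IsIntegral ℤ a₀ ∧ a - 1 = (n : F) * a₀)
    (hd : ∃ d₀ : F, IsIntegral ℤ d₀ ∧ d - 1 = (n : F) * d₀)
    (hb : ∃ b₀ : F,
      (∀ y : F, IsIntegral ℤ y → ∃ m : ℤ, Algebra.trace ℚ F (b₀ * y) = m) ∧ b = (n : F) * b₀)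
    (hc : ∃ c₀ : F,
      (∀ x : F, (∀ y : F, IsIntegral ℤ y → ∃ m : ℤ, Algebra.trace ℚ F (x * y) = m) →
        IsIntegral ℤ (c₀ * x)) ∧ c = (n : F) * c₀) :
    ∀ i j, ∃ m : ℤ,
      (P⁻¹ * Matrix.fromBlocks
        (Matrix.diagonal fun i => σ i a) (Matrix.diagonal fun i => σ i b)
        (Matrix.diagonal fun i => σ i c) (Matrix.diagonal fun i => σ i d) * P - 1) i j
      = (n : ℝ) * m := by
  obtain ⟨a₀, ha₀, ha⟩ := ha
  obtain ⟨d₀, hd₀, hd⟩ := hd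
  obtain ⟨b₀, hb₀, rfl⟩ := hb
  obtain ⟨c₀, hc₀, rfl⟩ := hc
  obtain rfl : R = embMatrix σ e := ext hR
  obtain rfl : R' = embMatrix σ estar := ext hR'
  subst hP
  have hRR' := embMatrix_transpose_mul_embMatrix_eq_one htr hdual
  have hc₀_dual : ∀ j, IsIntegral ℤ (c₀ * estar j) := fun j =>
    hc₀ _ fun y hy => by simpa [mul_comm] using exists_trace_mul_dual_eq_intCast hdual hspan hy j
  have hR'R : (embMatrix σ estar)ᵀ * embMatrix σ e = 1 := by
    simpa [transpose_mul] using congrArg transpose hRR'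
  rw [inv_fromBlocks_zero_zero_of_transpose_mul_eq_one hRR', fromBlocks_multiply,
    fromBlocks_multiply, fromBlocks_sub_one]
  simp only [Matrix.mul_zero, Matrix.zero_mul, add_zero, zero_add,
    transpose_mul_diagonal_mul_sub_one hRR', transpose_mul_diagonal_mul_sub_one hR'R]
  rintro (j | j) (k | k)
  · obtain ⟨m, hm⟩ := exists_trace_mul_dual_eq_intCast hdual hspan (ha₀.mul (hint j)) k
    exact ⟨m, embMatrix_conj_apply_eq_natCast_mul htr ha hm⟩
  · obtain ⟨m, hm⟩ := hb₀ _ ((hint j).mul (hint k))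
    exact ⟨m, embMatrix_conj_apply_eq_natCast_mul htr rfl (by rwa [mul_assoc])⟩
  · obtain ⟨m, hm⟩ := exists_trace_mul_dual_eq_intCast hdual hspan (hc₀_dual j) k
    exact ⟨m, embMatrix_conj_apply_eq_natCast_mul htr rfl hm⟩
  · obtain ⟨m, hm⟩ := exists_trace_mul_dual_eq_intCast hdual hspan (hd₀.mul (hint k)) j
    exact ⟨m, embMatrix_conj_apply_eq_natCast_mul htr hd (by rwa [mul_right_comm])⟩

/-- Let `n ≥ 1` and let `a, b, c, d ∈ F` satisfy `a·d − b·c = 1`,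
`a − 1 ∈ n·𝒪_F`, `d − 1 ∈ n·𝒪_F`, `b ∈ n·𝒟⁻¹` and `c ∈ n·𝒟`. Then every entry of
`P⁻¹ · [[a⋆, b⋆], [c⋆, d⋆]] · P − 1` lies in `n·ℤ`; that is, the corresponding integer
symplectic matrix is congruent to the identity modulo `n`. (`ῑ` maps the principal
congruence subgroup `Γ'(n) ⊆ SL(2, F)` into `Γ(n) ⊆ Sp(2g, ℤ)`.) -/
theorem stmt_9
    (F : Type*) [Field F] [Algebra ℚ F] [FiniteDimensional ℚ F]
    (g : ℕ) (hg : 1 ≤ g) (hdeg : Module.finrank ℚ F = g)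
    (σ : Fin g → (F →+* ℝ)) (hσ : Function.Injective σ)
    (htr : ∀ x : F, (algebraMap ℚ ℝ) (Algebra.trace ℚ F x) = ∑ i, σ i x)
    (e estar : Fin g → F)
    (hdual : ∀ j k, Algebra.trace ℚ F (estar j * e k) = if j = k then 1 else 0)
    (hint : ∀ i, IsIntegral ℤ (e i))
    (hspan : ∀ y : F, IsIntegral ℤ y → ∃ m : Fin g → ℤ, y = ∑ i, m i • e i)
    (R R' : Matrix (Fin g) (Fin g) ℝ)
    (hR : ∀ i j, R i j = σ i (e j))
    (hR' : ∀ i j, R' i j = σ i (estar j))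
    (P : Matrix (Fin g ⊕ Fin g) (Fin g ⊕ Fin g) ℝ)
    (hP : P = Matrix.fromBlocks R' 0 0 R)
    (n : ℕ) (hn : 1 ≤ n)
    (a b c d : F)
    (hdet : a * d - b * c = 1)
    (ha : ∃ a₀ : F, IsIntegral ℤ a₀ ∧ a - 1 = (n : F) * a₀)
    (hd : ∃ d₀ : F, IsIntegral ℤ d₀ ∧ d - 1 = (n : F) * d₀)
    (hb : ∃ b₀ : F,
      (∀ y : F, IsIntegral ℤ y → ∃ m : ℤ, Algebra.trace ℚ F (b₀ * y) = m) ∧ b = (n : F) * b₀)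
    (hc : ∃ c₀ : F,
      (∀ x : F, (∀ y : F, IsIntegral ℤ y → ∃ m : ℤ, Algebra.trace ℚ F (x * y) = m) →
        IsIntegral ℤ (c₀ * x)) ∧ c = (n : F) * c₀) :
    ∀ i j, ∃ m : ℤ,
      (P⁻¹ * Matrix.fromBlocks
        (Matrix.diagonal fun i => σ i a) (Matrix.diagonal fun i => σ i b)
        (Matrix.diagonal fun i => σ i c) (Matrix.diagonal fun i => σ i d) * P - 1) i j
      = (n : ℝ) * m :=
  stmt_9_general F g σ htr e estar hdual hint hspan R R' hR hR' P hP n a b c d ha hd hb hc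
end
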